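/- The dual function f satisfies, for all t ∈ ℝ: |f(t)| ≤ |t| and |f(t)| ≤ 2^(1/4)|t|^(1/2) and |f(t) f'(t)| ≤ 1/√2; moreover, for all t > 0, f(t)/2 ≤ t f'(t) ≤ f(t), and for all t ≥ 0, f(t)²/2 ≤ t f(t) f'(t) ≤ f(t)². -/

import Mathlib

open Filter Topology

/-- `g(s) = ∫_0^s √(1 + 2τ²) dτ`, the inverse of the dual function `f`. -/
noncomputable def g (s : ℝ) : ℝ := ∫ τ in (0:ℝ)..s, Real.sqrt (1 + 2 * τ ^ 2)

/-- The dual function `f = g⁻¹`. -/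
noncomputable def f : ℝ → ℝ := Function.invFun g

lemma cont_F : Continuous (fun τ : ℝ => Real.sqrt (1 + 2 * τ ^ 2)) := by
  exact (continuous_const.add (continuous_const.mul (continuous_pow 2))).sqrt

lemma sqrt_pos' (s : ℝ) : 0 < Real.sqrt (1 + 2 * s ^ 2) :=
  Real.sqrt_pos.mpr (by positivity)

lemma hg_deriv (s : ℝ) : HasDerivAt g (Real.sqrt (1 + 2 * s ^ 2)) s :=
  intervalIntegral.integral_hasDerivAt_right (cont_F.intervalIntegrable 0 s)
    (cont_F.stronglyMeasurableAtFilter _ _) cont_F.continuousAt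

lemma hg_mono : StrictMono g :=
  strictMono_of_deriv_pos fun s => by rw [(hg_deriv s).deriv]; exact sqrt_pos' s

lemma g_zero : g 0 = 0 := by simp [g]

lemma g_neg (s : ℝ) : g (-s) = -g s := by
  have h := intervalIntegral.integral_comp_neg (a := -s) (b := 0)
    (fun τ : ℝ => Real.sqrt (1 + 2 * τ ^ 2))
  simp only [neg_neg, neg_zero] at h
  have h2 : (∫ x in (-s)..(0:ℝ), Real.sqrt (1 + 2 * (-x) ^ 2))
      = ∫ x in (-s)..(0:ℝ), Real.sqrt (1 + 2 * x ^ 2) := by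
    congr 1; funext x; ring_nf
  rw [h2] at h
  unfold g
  rw [← h, ← intervalIntegral.integral_symm]

lemma g_ge_id {s : ℝ} (hs : 0 ≤ s) : s ≤ g s := by
  have h : ∫ τ in (0:ℝ)..s, (1:ℝ) ≤ g s := by
    apply intervalIntegral.integral_mono_on hs (intervalIntegrable_const)
      (cont_F.intervalIntegrable 0 s)
    intro x _
    rw [Real.one_le_sqrt]; nlinarith
  simpa using h

lemma g_ge_sq {s : ℝ} (hs : 0 ≤ s) : Real.sqrt 2 * s ^ 2 / 2 ≤ g s := by
  have h : ∫ τ in (0:ℝ)..s, (Real.sqrt 2 * τ) ≤ g s := by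
    apply intervalIntegral.integral_mono_on hs
      ((continuous_const.mul continuous_id).intervalIntegrable 0 s)
      (cont_F.intervalIntegrable 0 s)
    intro x hx
    have hx0 : 0 ≤ x := hx.1
    have : Real.sqrt 2 * x = Real.sqrt (2 * x ^ 2) := by
      rw [Real.sqrt_mul (by norm_num), Real.sqrt_sq hx0]
    show Real.sqrt 2 * x ≤ _
    rw [this]
    exact Real.sqrt_le_sqrt (by nlinarith)
  calc Real.sqrt 2 * s ^ 2 / 2 = ∫ τ in (0:ℝ)..s, (Real.sqrt 2 * τ) := by
        rw [intervalIntegral.integral_const_mul, integral_id]; ring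
    _ ≤ g s := h

lemma g_le {s : ℝ} (hs : 0 ≤ s) : g s ≤ s * Real.sqrt (1 + 2 * s ^ 2) := by
  have h : g s ≤ ∫ _ in (0:ℝ)..s, Real.sqrt (1 + 2 * s ^ 2) := by
    apply intervalIntegral.integral_mono_on hs (cont_F.intervalIntegrable 0 s)
      (intervalIntegrable_const)
    intro x hx
    exact Real.sqrt_le_sqrt (by nlinarith [hx.1, hx.2])
  simpa [mul_comm] using h

lemma phi_deriv (s : ℝ) :
    HasDerivAt (fun s : ℝ => s * Real.sqrt (1 + 2 * s ^ 2) / 2)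
      ((Real.sqrt (1 + 2 * s ^ 2) + s * ((4 * s) / (2 * Real.sqrt (1 + 2 * s ^ 2)))) / 2) s := by
  have h1 : HasDerivAt (fun s : ℝ => 1 + 2 * s ^ 2) (4 * s) s := by
    have := ((hasDerivAt_pow 2 s).const_mul 2).const_add 1
    simpa using this.congr_deriv (by ring)
  have h2 := h1.sqrt (ne_of_gt (by positivity))
  have h3 := ((hasDerivAt_id s).mul h2).div_const 2
  simp only [id_eq] at h3
  exact h3.congr_deriv (by ring)

lemma g_lower {s : ℝ} (hs : 0 ≤ s) : s * Real.sqrt (1 + 2 * s ^ 2) / 2 ≤ g s := by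
  set h : ℝ → ℝ := fun s => g s - s * Real.sqrt (1 + 2 * s ^ 2) / 2 with hh
  have hmono : StrictMono h := by
    apply strictMono_of_deriv_pos
    intro x
    have hd := (hg_deriv x).sub (phi_deriv x)
    rw [(show HasDerivAt h _ x from hd).deriv]
    set p := Real.sqrt (1 + 2 * x ^ 2) with hp
    have hppos : 0 < p := sqrt_pos' x
    have hpsq : p ^ 2 = 1 + 2 * x ^ 2 := Real.sq_sqrt (by positivity)
    have key : p - (p + x * (4 * x / (2 * p))) / 2 = 1 / (2 * p) := by
      field_simp
      nlinarith [hpsq]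
    rw [key]
    positivity
  have h0 : h 0 = 0 := by simp [hh, g_zero]
  have := hmono.monotone hs
  rw [h0] at this
  simpa [hh] using this

lemma hg_cont : Continuous g :=
  Differentiable.continuous (fun s => (hg_deriv s).differentiableAt)

lemma hg_surj : Function.Surjective g := by
  apply hg_cont.surjective
  · apply tendsto_atTop_mono' atTop ?_ tendsto_id
    filter_upwards [eventually_ge_atTop (0:ℝ)] with s hs using g_ge_id hs
  · apply tendsto_atBot_mono' atBot ?_ tendsto_id
    filter_upwards [eventually_le_atBot (0:ℝ)] with s hs
    have := g_ge_id (neg_nonneg.mpr hs)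
    rw [g_neg] at this
    simpa using by linarith

lemma h_gf (t : ℝ) : g (f t) = t := Function.rightInverse_invFun hg_surj t

lemma h_fg (s : ℝ) : f (g s) = s := Function.leftInverse_invFun hg_mono.injective s

lemma f_zero : f 0 = 0 := by
  conv_lhs => rw [← g_zero]
  exact h_fg 0

lemma f_eq_iso : f = ⇑(StrictMono.orderIsoOfSurjective g hg_mono hg_surj).symm := by
  funext t
  apply hg_mono.injective
  rw [h_gf]
  exact ((StrictMono.orderIsoOfSurjective g hg_mono hg_surj).apply_symm_apply t).symm

lemma hf_cont : Continuous f := by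
  rw [f_eq_iso]; exact OrderIso.continuous _

lemma hf_deriv (t : ℝ) :
    HasDerivAt f (Real.sqrt (1 + 2 * (f t) ^ 2))⁻¹ t := by
  apply HasDerivAt.of_local_left_inverse hf_cont.continuousAt (hg_deriv (f t))
    (ne_of_gt (sqrt_pos' _))
  exact Eventually.of_forall h_gf

lemma f_nonneg {t : ℝ} (ht : 0 ≤ t) : 0 ≤ f t := by
  by_contra h
  push_neg at h
  have := hg_mono h
  rw [h_gf, g_zero] at this
  linarith

lemma f_pos {t : ℝ} (ht : 0 < t) : 0 < f t := by
  by_contra h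
  push_neg at h
  have := hg_mono.monotone h
  rw [h_gf, g_zero] at this
  linarith

lemma f_neg (t : ℝ) : f (-t) = -f t := by
  have : g (-(f t)) = -t := by rw [g_neg, h_gf]
  rw [← this, h_fg]

/-- Elementary pointwise bounds for the dual function `f` and its derivative. -/
theorem stmt_19 :
    (∀ t : ℝ, |f t| ≤ |t|)
    ∧ (∀ t : ℝ, |f t| ≤ (2:ℝ) ^ ((1:ℝ) / 4) * |t| ^ ((1:ℝ) / 2))
    ∧ (∀ t : ℝ, |f t * deriv f t| ≤ 1 / Real.sqrt 2)
    ∧ (∀ t : ℝ, 0 < t → f t / 2 ≤ t * deriv f t ∧ t * deriv f t ≤ f t)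
    ∧ (∀ t : ℝ, 0 ≤ t → f t ^ 2 / 2 ≤ t * (f t * deriv f t)
        ∧ t * (f t * deriv f t) ≤ f t ^ 2) := by
  have key1 : ∀ t : ℝ, 0 ≤ t → f t ≤ t := fun t ht => by
    have h := g_ge_id (f_nonneg ht); rwa [h_gf] at h
  have fle : ∀ t : ℝ, t ≤ 0 → f t ≤ 0 := fun t ht => by
    have h := f_nonneg (neg_nonneg.mpr ht)
    rw [f_neg] at h; linarith
  have p1 : ∀ t : ℝ, |f t| ≤ |t| := by
    intro t
    rcases le_total 0 t with ht | ht
    · rw [abs_of_nonneg (f_nonneg ht), abs_of_nonneg ht]; exact key1 t ht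
    · have h := key1 (-t) (by linarith)
      rw [f_neg] at h
      rw [abs_of_nonpos (fle t ht), abs_of_nonpos ht]; linarith
  have p2 : ∀ t : ℝ, |f t| ≤ (2:ℝ) ^ ((1:ℝ) / 4) * |t| ^ ((1:ℝ) / 2) := by
    have key2 : ∀ t : ℝ, 0 ≤ t → f t ≤ (2:ℝ) ^ ((1:ℝ) / 4) * t ^ ((1:ℝ) / 2) := by
      intro t ht
      have hs := f_nonneg ht
      have hg := g_ge_sq hs
      rw [h_gf] at hg
      have hsq : f t ^ 2 ≤ Real.sqrt 2 * t := by
        nlinarith [mul_le_mul_of_nonneg_left hg (Real.sqrt_nonneg 2),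
          Real.mul_self_sqrt (show (0:ℝ) ≤ 2 by norm_num),
          Real.sqrt_pos.mpr (show (0:ℝ) < 2 by norm_num)]
      have h2 : f t ≤ Real.sqrt (Real.sqrt 2 * t) :=
        (Real.le_sqrt hs (by positivity)).mpr hsq
      have h3 : Real.sqrt (Real.sqrt 2 * t) = (2:ℝ) ^ ((1:ℝ) / 4) * t ^ ((1:ℝ) / 2) := by
        rw [Real.sqrt_mul (Real.sqrt_nonneg 2), Real.sqrt_eq_rpow, Real.sqrt_eq_rpow,
          Real.sqrt_eq_rpow, ← Real.rpow_mul (by norm_num : (0:ℝ) ≤ 2)]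
        norm_num
      rw [h3] at h2; exact h2
    intro t
    rcases le_total 0 t with ht | ht
    · rw [abs_of_nonneg (f_nonneg ht), abs_of_nonneg ht]; exact key2 t ht
    · have h := key2 (-t) (by linarith)
      rw [f_neg] at h
      rw [abs_of_nonpos (fle t ht), abs_of_nonpos ht]; linarith
  have p3 : ∀ t : ℝ, |f t * deriv f t| ≤ 1 / Real.sqrt 2 := by
    intro t
    rw [(hf_deriv t).deriv]
    set s := f t with hs
    set p := Real.sqrt (1 + 2 * s ^ 2) with hp
    have hppos : 0 < p := sqrt_pos' s
    have h2pos : (0:ℝ) < Real.sqrt 2 := Real.sqrt_pos.mpr (by norm_num)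
    rw [abs_mul, abs_inv, abs_of_pos hppos, ← div_eq_mul_inv,
      div_le_div_iff₀ hppos h2pos]
    have heq : Real.sqrt 2 * |s| = Real.sqrt (2 * s ^ 2) := by
      rw [Real.sqrt_mul (by norm_num), Real.sqrt_sq_eq_abs]
    have hle : Real.sqrt (2 * s ^ 2) ≤ p := Real.sqrt_le_sqrt (by nlinarith)
    nlinarith [hppos, h2pos]
  have p4 : ∀ t : ℝ, 0 < t → f t / 2 ≤ t * deriv f t ∧ t * deriv f t ≤ f t := by
    intro t ht
    rw [(hf_deriv t).deriv]
    set s := f t with hs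
    have hspos : 0 < s := f_pos ht
    set p := Real.sqrt (1 + 2 * s ^ 2) with hp
    have hppos : 0 < p := sqrt_pos' s
    have hppinv : p * p⁻¹ = 1 := mul_inv_cancel₀ hppos.ne'
    have hpinv : 0 ≤ p⁻¹ := inv_nonneg.mpr hppos.le
    have hup : t ≤ s * p := by have := g_le hspos.le; rwa [h_gf] at this
    have hlo : s * p / 2 ≤ t := by have := g_lower hspos.le; rwa [h_gf] at this
    constructor
    · nlinarith [mul_le_mul_of_nonneg_right hlo hpinv]
    · nlinarith [mul_le_mul_of_nonneg_right hup hpinv]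
  refine ⟨p1, p2, p3, p4, ?_⟩
  intro t ht
  rcases ht.eq_or_lt with rfl | ht'
  · simp [f_zero]
  · obtain ⟨h1, h2⟩ := p4 t ht'
    have hf := (f_pos ht').le
    constructor
    · nlinarith [mul_le_mul_of_nonneg_left h1 hf]
    · nlinarith [mul_le_mul_of_nonneg_left h2 hf]
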